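/- arXiv:math/0409216 — 3 statements merged into one kernel-verified Lean document; each statement's English description precedes it below -/
import Mathlib

section
/- Let s, ω ∈ ℂ with Re(s) > 0 and Im(ω) > 0. Then ω^{-s} = (e^{-iπs/2}/Γ(s)) ∫₀^∞ λ^{s-1} e^{iλω} dλ, where ω^{-s} denotes the principal branch of the complex power and Γ is the Gamma function. -/
open MeasureTheory Set Complex Filter

namespace PlaneWaveAux

lemma integrable_rexp (a b : ℝ) (ha : -1 < a) (hb : 0 < b) :
    IntegrableOn (fun t : ℝ => t ^ a * Real.exp (-b * t)) (Ioi 0) := by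
  have := integrableOn_rpow_mul_exp_neg_mul_rpow ha one_pos hb
  simpa [Real.rpow_one] using this

lemma cont_integrand (s z : ℂ) :
    ContinuousOn (fun t : ℝ => (t : ℂ) ^ (s - 1) * Complex.exp (-(z * t))) (Ioi 0) := by
  apply ContinuousOn.mul
  · exact (Complex.continuous_ofReal.continuousOn).cpow_const
      (fun t ht => Complex.mem_slitPlane_iff.2 (Or.inl (by simpa using (mem_Ioi.1 ht))))
  · fun_prop

lemma norm_integrand (s z : ℂ) {t : ℝ} (ht : 0 < t) :
    ‖(t : ℂ) ^ (s - 1) * Complex.exp (-(z * t))‖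
      = t ^ (s.re - 1) * Real.exp (-z.re * t) := by
  rw [norm_mul, Complex.norm_cpow_eq_rpow_re_of_pos ht,
    Complex.norm_exp]
  simp [Complex.sub_re, mul_comm]

lemma integrableC (s : ℂ) (hs : 0 < s.re) {z : ℂ} (hz : 0 < z.re) :
    IntegrableOn (fun t : ℝ => (t : ℂ) ^ (s - 1) * Complex.exp (-(z * t))) (Ioi 0) := by
  refine Integrable.mono' ((integrable_rexp (s.re - 1) z.re (by linarith) hz))
    ((cont_integrand s z).aestronglyMeasurable measurableSet_Ioi) ?_
  filter_upwards [self_mem_ae_restrict (measurableSet_Ioi : MeasurableSet (Ioi (0:ℝ)))] with t ht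
  rw [norm_integrand s z (mem_Ioi.1 ht)]

lemma laplace_real (s : ℂ) (hs : 0 < s.re) {r : ℝ} (hr : 0 < r) :
    (∫ t in Ioi (0:ℝ), (t : ℂ) ^ (s - 1) * Complex.exp (-((r:ℂ) * t))) =
      Complex.Gamma s * (r : ℂ) ^ (-s) := by
  rw [Complex.integral_cpow_mul_exp_neg_mul_Ioi hs hr, mul_comm]
  congr 1
  rw [one_div, inv_cpow _ _ (by
      rw [Complex.arg_ofReal_of_nonneg hr.le]; exact (Real.pi_ne_zero).symm),
    ← cpow_neg]

lemma diff_f (s : ℂ) (hs : 0 < s.re) {z₀ : ℂ} (hz₀ : 0 < z₀.re) :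
    DifferentiableAt ℂ
      (fun z : ℂ => ∫ t in Ioi (0:ℝ), (t : ℂ) ^ (s - 1) * Complex.exp (-(z * t))) z₀ := by
  set c := z₀.re with hc
  have hε : 0 < c / 2 := by positivity
  have key := hasDerivAt_integral_of_dominated_loc_of_deriv_le (μ := volume.restrict (Ioi 0))
    (F := fun (z : ℂ) (t : ℝ) => (t : ℂ) ^ (s - 1) * Complex.exp (-(z * t)))
    (F' := fun (z : ℂ) (t : ℝ) => (t : ℂ) ^ (s - 1) * (Complex.exp (-(z * t)) * (-(t : ℂ))))
    (x₀ := z₀) (bound := fun t : ℝ => t ^ s.re * Real.exp (-(c / 2) * t)) (Metric.ball_mem_nhds z₀ hε)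
    ?_ ?_ ?_ ?_ ?_ ?_
  · exact key.2.differentiableAt
  · filter_upwards with z
    exact ((cont_integrand s z).aestronglyMeasurable measurableSet_Ioi)
  · exact integrableC s hs hz₀
  · refine ContinuousOn.aestronglyMeasurable ?_ measurableSet_Ioi
    have hcont : ContinuousOn
        (fun t : ℝ => ((t : ℂ) ^ (s - 1) * Complex.exp (-(z₀ * t))) * (-(t : ℂ))) (Ioi 0) :=
      (cont_integrand s z₀).mul (by fun_prop)
    exact hcont.congr fun t ht => by ring
  · filter_upwards [self_mem_ae_restrict (measurableSet_Ioi : MeasurableSet (Ioi (0:ℝ)))]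
      with t ht z hz
    have ht' : 0 < t := mem_Ioi.1 ht
    have hzre : c / 2 ≤ z.re := by
      have h1 : |z.re - z₀.re| ≤ ‖z - z₀‖ := by
        simpa using Complex.abs_re_le_norm (z - z₀)
      have h2 : ‖z - z₀‖ < c / 2 := by
        simpa [Complex.dist_eq] using (Metric.mem_ball.1 hz)
      have := (abs_lt.1 (lt_of_le_of_lt h1 h2)).1
      linarith
    have hnorm : ‖(t : ℂ) ^ (s - 1) * (Complex.exp (-(z * t)) * (-(t : ℂ)))‖
        = t ^ (s.re - 1) * Real.exp (-z.re * t) * t := by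
      rw [show (t : ℂ) ^ (s - 1) * (Complex.exp (-(z * t)) * (-(t : ℂ)))
          = ((t : ℂ) ^ (s - 1) * Complex.exp (-(z * t))) * (-(t : ℂ)) by ring,
        norm_mul, norm_integrand s z ht', norm_neg, Complex.norm_real,
        Real.norm_of_nonneg ht'.le]
    rw [hnorm]
    have h3 : t ^ (s.re - 1) * Real.exp (-z.re * t) * t
        = t ^ s.re * Real.exp (-z.re * t) := by
      rw [show t ^ (s.re - 1) * Real.exp (-z.re * t) * t
          = t ^ (s.re - 1) * t * Real.exp (-z.re * t) by ring]
      congr 1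
      rw [← Real.rpow_add_one ht'.ne', sub_add_cancel]
    rw [h3]
    have hexp : Real.exp (-z.re * t) ≤ Real.exp (-(c / 2) * t) :=
      Real.exp_le_exp.2 (by nlinarith)
    exact mul_le_mul_of_nonneg_left hexp (Real.rpow_nonneg ht'.le _)
  · exact integrable_rexp s.re (c / 2) (by linarith) hε
  · filter_upwards [self_mem_ae_restrict (measurableSet_Ioi : MeasurableSet (Ioi (0:ℝ)))]
      with t ht z hz
    have h1 : HasDerivAt (fun w : ℂ => -(w * (t : ℂ))) (-(t : ℂ)) z := by
      simpa using ((hasDerivAt_id z).mul_const (t : ℂ)).fun_neg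
    exact (h1.cexp).const_mul _

lemma laplace_eq (s : ℂ) (hs : 0 < s.re) {z : ℂ} (hz : 0 < z.re) :
    (∫ t in Ioi (0:ℝ), (t : ℂ) ^ (s - 1) * Complex.exp (-(z * t))) =
      Complex.Gamma s * z ^ (-s) := by
  set U : Set ℂ := {w : ℂ | 0 < w.re} with hU
  have hUopen : IsOpen U := isOpen_lt continuous_const Complex.continuous_re
  have hUconn : IsPreconnected U := (convex_halfSpace_re_gt 0).isPreconnected
  set f : ℂ → ℂ := fun w => ∫ t in Ioi (0:ℝ), (t : ℂ) ^ (s - 1) * Complex.exp (-(w * t))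
  set g : ℂ → ℂ := fun w => Complex.Gamma s * w ^ (-s)
  have hfA : AnalyticOnNhd ℂ f U :=
    DifferentiableOn.analyticOnNhd
      (fun w hw => (diff_f s hs hw).differentiableWithinAt) hUopen
  have hgA : AnalyticOnNhd ℂ g U := by
    refine DifferentiableOn.analyticOnNhd (fun w hw => ?_) hUopen
    refine DifferentiableAt.differentiableWithinAt ?_
    exact (differentiableAt_const _).mul
      (differentiableAt_id.cpow (differentiableAt_const _)
        (Complex.mem_slitPlane_iff.2 (Or.inl hw)))
  have h1U : (1 : ℂ) ∈ U := by simp [hU]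
  -- equality frequently near 1
  set u : ℕ → ℂ := fun n => ((1 + ((n : ℝ) + 1)⁻¹ : ℝ) : ℂ)
  have hu_ne : ∀ n, u n ≠ 1 := by
    intro n
    simp only [u, Ne, ← Complex.ofReal_one, Complex.ofReal_inj]
    have : (0 : ℝ) < ((n : ℝ) + 1)⁻¹ := by positivity
    intro h; linarith
  have hu_tendsto : Tendsto u atTop (nhdsWithin 1 {w : ℂ | w ≠ 1}) := by
    apply tendsto_nhdsWithin_of_tendsto_nhds_of_eventually_within
    · have h0 : Tendsto (fun n : ℕ => 1 + ((n : ℝ) + 1)⁻¹) atTop (nhds 1) := by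
        have := tendsto_one_div_add_atTop_nhds_zero_nat (𝕜 := ℝ)
        simpa [one_div] using tendsto_const_nhds.add this
      have := (Complex.continuous_ofReal.tendsto 1).comp h0
      simpa [u, Function.comp_def] using this
    · exact Eventually.of_forall fun n => hu_ne n
  have hfg : ∃ᶠ w in nhdsWithin 1 {w : ℂ | w ≠ 1}, f w = g w := by
    refine hu_tendsto.frequently (Frequently.of_forall fun n => ?_)
    have hrn : (0 : ℝ) < 1 + ((n : ℝ) + 1)⁻¹ := by positivity
    simpa [f, g, u] using laplace_real s hs hrn
  have := hfA.eqOn_of_preconnected_of_frequently_eq hgA hUconn h1U hfg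
  exact this hz

end PlaneWaveAux

/-- **Plane-wave representation, upper half plane.**
For `s, ω ∈ ℂ` with `Re s > 0` and `Im ω > 0`,
`ω^(-s) = (e^(-iπs/2)/Γ(s)) ∫₀^∞ λ^(s-1) e^(iλω) dλ`, with principal-branch complex powers. -/
theorem planeWave_im_pos (s ω : ℂ) (hs : 0 < s.re) (hω : 0 < ω.im) :
    ω ^ (-s) =
      (Complex.exp (-(Complex.I * (Real.pi : ℂ) * s) / 2) / Complex.Gamma s) *
        ∫ l in Set.Ioi (0 : ℝ),
          (l : ℂ) ^ (s - 1) * Complex.exp (Complex.I * (l : ℂ) * ω) := by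
  set z : ℂ := -(Complex.I * ω) with hzdef
  have hz : 0 < z.re := by simp [hzdef, hω]
  have hint : (∫ l in Set.Ioi (0 : ℝ),
      (l : ℂ) ^ (s - 1) * Complex.exp (Complex.I * (l : ℂ) * ω)) =
      ∫ t in Set.Ioi (0 : ℝ), (t : ℂ) ^ (s - 1) * Complex.exp (-(z * t)) := by
    refine setIntegral_congr_fun measurableSet_Ioi fun t _ => ?_
    congr 1
    · rw [hzdef]; ring_nf
  rw [hint, PlaneWaveAux.laplace_eq s hs hz]
  have hΓ : Complex.Gamma s ≠ 0 := by
    refine Complex.Gamma_ne_zero fun m hm => ?_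
    have : s.re = -(m : ℝ) := by rw [hm]; simp
    have : (0:ℝ) < -(m:ℝ) := this ▸ hs
    have : (0:ℝ) ≤ (m:ℝ) := Nat.cast_nonneg m
    linarith
  rw [div_mul_eq_mul_div, mul_comm (Complex.Gamma s), mul_div_assoc,
    mul_div_assoc, div_self hΓ, mul_one]
  -- now goal : ω ^ (-s) = exp (-(I*π*s)/2) * z ^ (-s)
  have hω0 : ω ≠ 0 := fun h => by simp [h] at hω
  have hz0 : z ≠ 0 := by
    intro h; rw [h] at hz; simp at hz
  have hlog : Complex.log z = Complex.log ω + -(Real.pi / 2) * Complex.I := by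
    have hI : (-Complex.I) ≠ 0 := by simp [Complex.I_ne_zero]
    have harg : Complex.arg (-Complex.I) + Complex.arg ω ∈ Set.Ioc (-Real.pi) Real.pi := by
      rw [Complex.arg_neg_I]
      constructor
      · have hnn : 0 ≤ Complex.arg ω := Complex.arg_nonneg_iff.2 hω.le
        have := Real.pi_pos
        linarith
      · have := Complex.arg_le_pi ω
        have := Real.pi_pos
        linarith
    have hmul : z = (-Complex.I) * ω := by rw [hzdef]; ring
    rw [hmul, Complex.log_mul hI hω0 harg, Complex.log_neg_I]
    ring
  rw [Complex.cpow_def_of_ne_zero hω0, Complex.cpow_def_of_ne_zero hz0, hlog,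
    ← Complex.exp_add]
  congr 1
  ring
end

section
/- Let τ ∈ ℂ lie in the fundamental region, let λ > 0 with e^{iλ} ≠ 1, e^{iλ(τ-1)} ≠ 1 and e^{iλ(τ+1)} ≠ 1, and let K ≥ 1 be an integer. Then Σ_{n=1}^{K} ( ½ e^{iλ(nτ - n)} + Σ_{m=-n+1}^{n-1} e^{iλ(nτ + m)} + ½ e^{iλ(nτ + n)} ) = 2 e^{iτλ} f₂(τ,λ) − 2 e^{iτλ(K+1)} f₂^{(K)}(τ,λ), where f₂^{(K)}(τ,λ) = ¼ ((1 + e^{iλ})/(1 − e^{iλ})) [ e^{-iλ(K+1)}/(1 − e^{iλ(τ-1)}) − e^{iλ(K+1)}/(1 − e^{iλ(τ+1)}) ]. -/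
/-!
Write `q = e^{iλ}` and `z = e^{iτλ}`. The `n`-th summand is `z^n` times a trapezoidal sum of
`q^m` over `-n ≤ m ≤ n`, which telescopes to `(q + 1)/(2(q - 1)) (q^n - q^{-n})`; so the whole
sum is `(q + 1)/(2(q - 1))` times a difference of two finite geometric series, in `zq` and
`zq⁻¹`. Writing each finite series as the formal full series minus its tail from `K + 1` on,
the full series combine into `2z f₂`, because `cos²(λ/2) = (q + 2 + q⁻¹)/4` and
`1 - 2z cos λ + z² = (1 - zq)(1 - zq⁻¹)`, while the tails combine into `2z^{K+1} f₂^{(K)}`.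
-/

/-- `f₂(τ,λ) = cos²(λ/2)/(1 − 2e^{iτλ}cos(λ) + e^{2iτλ})`. -/
noncomputable def f2 (τ : ℂ) (l : ℝ) : ℂ :=
  Complex.cos ((l : ℂ) / 2) ^ 2 /
    (1 - 2 * Complex.exp (Complex.I * τ * (l : ℂ)) * Complex.cos (l : ℂ) +
      Complex.exp (2 * Complex.I * τ * (l : ℂ)))

/-- `f₂^{(K)}(τ,λ) = ¼ ((1+e^{iλ})/(1−e^{iλ})) [ e^{-iλ(K+1)}/(1−e^{iλ(τ-1)}) − e^{iλ(K+1)}/(1−e^{iλ(τ+1)}) ]`. -/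
noncomputable def f2K (τ : ℂ) (l : ℝ) (K : ℕ) : ℂ :=
  (1 / 4 : ℂ) * ((1 + Complex.exp (Complex.I * (l : ℂ))) / (1 - Complex.exp (Complex.I * (l : ℂ)))) *
    (Complex.exp (-(Complex.I * (l : ℂ) * ((K : ℂ) + 1))) /
        (1 - Complex.exp (Complex.I * (l : ℂ) * (τ - 1))) -
      Complex.exp (Complex.I * (l : ℂ) * ((K : ℂ) + 1)) /
        (1 - Complex.exp (Complex.I * (l : ℂ) * (τ + 1))))

open Complex Finset

section FieldIdentities

variable {F : Type*} [Field F]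

theorem sub_one_mul_sum_Ico_zpow {q : F} (hq : q ≠ 0) {a b : ℤ} (hab : a ≤ b) :
    (q - 1) * ∑ m ∈ Ico a b, q ^ m = q ^ b - q ^ a := by
  induction b, hab using Int.leInduction with
  | base => simp
  | succ b hab ih =>
    rw [Ico_add_one_right_eq_Icc, ← Ico_insert_right hab, sum_insert right_notMem_Ico, mul_add,
      ih, zpow_add_one₀ hq]
    ring

theorem trapezoid_sum_zpow [NeZero (2 : F)] {q : F} (hq0 : q ≠ 0) (hq1 : q ≠ 1) {n : ℤ}
    (hn : 1 ≤ n) :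
    1 / 2 * q ^ (-n) + ∑ m ∈ Icc (-n + 1) (n - 1), q ^ m + 1 / 2 * q ^ n =
      (q + 1) / (2 * (q - 1)) * (q ^ n - q ^ (-n)) := by
  have hq1' : q - 1 ≠ 0 := sub_ne_zero.mpr hq1
  have hgeom := sub_one_mul_sum_Ico_zpow hq0 (a := -n + 1) (b := n) (by omega)
  rw [← sub_add_cancel n 1, Ico_add_one_right_eq_Icc, sub_add_cancel] at hgeom
  rw [eq_div_of_mul_eq hq1' ((mul_comm _ _).trans hgeom), zpow_add_one₀ hq0, zpow_neg]
  field_simp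
  ring

theorem sum_Icc_one_pow_eq {w : F} (hw : w ≠ 1) (N : ℕ) :
    ∑ n ∈ Icc 1 N, w ^ n = w / (1 - w) - w ^ (N + 1) / (1 - w) := by
  rw [← Ico_add_one_right_eq_Icc, geom_sum_Ico hw (by omega), ← neg_sub 1 w, div_neg]
  ring

theorem quadrant_main_term_eq [NeZero (2 : F)] {q z : F} (hq0 : q ≠ 0) (hq1 : q ≠ 1)
    (hzq : z * q ≠ 1) (hzq' : z * q⁻¹ ≠ 1) :
    (q + 1) / (2 * (q - 1)) * (z * q / (1 - z * q) - z * q⁻¹ / (1 - z * q⁻¹)) =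
      2 * z * ((q + 2 + q⁻¹) / 4 / ((1 - z * q) * (1 - z * q⁻¹))) := by
  have : (4 : F) ≠ 0 := by
    rw [← two_add_two_eq_four, ← two_mul]
    exact mul_ne_zero two_ne_zero two_ne_zero
  have : q - 1 ≠ 0 := sub_ne_zero.mpr hq1
  have : 1 - q * z ≠ 0 := sub_ne_zero.mpr (mul_comm q z ▸ hzq.symm)
  have : q - z ≠ 0 := fun h => hzq' (by rw [← sub_eq_zero.mp h, mul_inv_cancel₀ hq0])
  field_simp
  ring

theorem quadrant_tail_term_eq [NeZero (2 : F)] {q : F} (hq1 : q ≠ 1) (w A a b : F) :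
    (q + 1) / (2 * (q - 1)) * (w * A / a - w * A⁻¹ / b) =
      2 * w * (1 / 4 * ((1 + q) / (1 - q)) * (A⁻¹ / b - A / a)) := by
  have : q - 1 ≠ 0 := sub_ne_zero.mpr hq1
  have : 1 - q ≠ 0 := sub_ne_zero.mpr hq1.symm
  have : (4 : F) ≠ 0 := by
    rw [← two_add_two_eq_four, ← two_mul]
    exact mul_ne_zero two_ne_zero two_ne_zero
  field_simp
  ring

end FieldIdentities

theorem exp_I_mul_mul_nat_mul_add_int (τ l : ℂ) (n : ℕ) (m : ℤ) :
    exp (I * l * (n * τ + m)) = exp (I * τ * l) ^ n * exp (I * l) ^ m := by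
  rw [← exp_nat_mul, ← exp_int_mul, ← exp_add]
  ring_nf

theorem cos_eq_exp_add_inv (x : ℂ) : cos x = (exp (I * x) + (exp (I * x))⁻¹) / 2 := by
  rw [cos, ← exp_neg]
  ring_nf

theorem cos_half_sq_eq (x : ℂ) :
    cos (x / 2) ^ 2 = (exp (I * x) + 2 + (exp (I * x))⁻¹) / 4 := by
  rw [cos_sq, mul_div_cancel₀ x two_ne_zero, cos_eq_exp_add_inv]
  ring

theorem one_sub_two_mul_cos_add_sq (w x : ℂ) :
    1 - 2 * w * cos x + w ^ 2 = (1 - w * exp (I * x)) * (1 - w * (exp (I * x))⁻¹) := by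
  rw [cos_eq_exp_add_inv]
  field_simp
  ring

theorem exp_I_mul_mul_sub_one (τ l : ℂ) :
    exp (I * l * (τ - 1)) = exp (I * τ * l) * (exp (I * l))⁻¹ := by
  rw [← exp_neg, ← exp_add]
  ring_nf

theorem exp_I_mul_mul_add_one (τ l : ℂ) :
    exp (I * l * (τ + 1)) = exp (I * τ * l) * exp (I * l) := by
  rw [← exp_add]
  ring_nf

theorem exp_mul_natCast_add_one (x : ℂ) (K : ℕ) : exp (x * (K + 1)) = exp x ^ (K + 1) := by
  rw [← exp_nat_mul]
  push_cast
  ring_nf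

theorem f2_eq (τ : ℂ) (l : ℝ) :
    f2 τ l = (exp (I * l) + 2 + (exp (I * l))⁻¹) / 4 /
      ((1 - exp (I * τ * l) * exp (I * l)) * (1 - exp (I * τ * l) * (exp (I * l))⁻¹)) := by
  rw [f2, cos_half_sq_eq, ← one_sub_two_mul_cos_add_sq, ← exp_nat_mul]
  ring_nf

theorem f2K_eq (τ : ℂ) (l : ℝ) (K : ℕ) :
    f2K τ l K = 1 / 4 * ((1 + exp (I * l)) / (1 - exp (I * l))) *
      ((exp (I * l) ^ (K + 1))⁻¹ / (1 - exp (I * τ * l) * (exp (I * l))⁻¹) -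
        exp (I * l) ^ (K + 1) / (1 - exp (I * τ * l) * exp (I * l))) := by
  rw [f2K, exp_neg, exp_mul_natCast_add_one, exp_I_mul_mul_sub_one, exp_I_mul_mul_add_one]

theorem quadrant_row_eq (τ l : ℂ) (h1 : exp (I * l) ≠ 1) {n : ℕ} (hn : 1 ≤ n) :
    1 / 2 * exp (I * l * (n * τ - n)) +
        ∑ m ∈ Icc (-(n : ℤ) + 1) (n - 1), exp (I * l * (n * τ + m)) +
        1 / 2 * exp (I * l * (n * τ + n)) =
      (exp (I * l) + 1) / (2 * (exp (I * l) - 1)) *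
        ((exp (I * τ * l) * exp (I * l)) ^ n - (exp (I * τ * l) * (exp (I * l))⁻¹) ^ n) := by
  have hleft : (n : ℂ) * τ - n = n * τ + ((-(n : ℤ) : ℤ) : ℂ) := by push_cast; ring
  have hright : (n : ℂ) * τ + n = n * τ + ((n : ℤ) : ℂ) := by push_cast; ring
  rw [hleft, hright]
  simp_rw [exp_I_mul_mul_nat_mul_add_int, ← mul_sum]
  set q := exp (I * l)
  calc _ = exp (I * τ * l) ^ n * (1 / 2 * q ^ (-(n : ℤ)) +
          ∑ m ∈ Icc (-(n : ℤ) + 1) (n - 1), q ^ m + 1 / 2 * q ^ (n : ℤ)) := by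
        ring
    _ = _ := by
      rw [trapezoid_sum_zpow (exp_ne_zero _) h1 (by exact_mod_cast hn), zpow_neg, zpow_natCast,
        mul_pow, mul_pow, inv_pow]
      ring

theorem quadrant_sum_f2_general (τ : ℂ) (l : ℝ)
    (h1 : Complex.exp (Complex.I * (l : ℂ)) ≠ 1)
    (h2 : Complex.exp (Complex.I * (l : ℂ) * (τ - 1)) ≠ 1)
    (h3 : Complex.exp (Complex.I * (l : ℂ) * (τ + 1)) ≠ 1)
    (K : ℕ) :
    ∑ n ∈ Finset.Icc 1 K,
        ((1 / 2 : ℂ) * Complex.exp (Complex.I * (l : ℂ) * ((n : ℂ) * τ - (n : ℂ))) +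
          ∑ m ∈ Finset.Icc (-(n : ℤ) + 1) ((n : ℤ) - 1),
            Complex.exp (Complex.I * (l : ℂ) * ((n : ℂ) * τ + (m : ℂ))) +
          (1 / 2 : ℂ) * Complex.exp (Complex.I * (l : ℂ) * ((n : ℂ) * τ + (n : ℂ)))) =
      2 * Complex.exp (Complex.I * τ * (l : ℂ)) * f2 τ l -
        2 * Complex.exp (Complex.I * τ * (l : ℂ) * ((K : ℂ) + 1)) * f2K τ l K := by
  have hzq : exp (I * τ * l) * exp (I * l) ≠ 1 := by rwa [← exp_I_mul_mul_add_one]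
  have hzq' : exp (I * τ * l) * (exp (I * l))⁻¹ ≠ 1 := by rwa [← exp_I_mul_mul_sub_one]
  rw [sum_congr rfl fun n hn => quadrant_row_eq τ l h1 (mem_Icc.mp hn).1, ← mul_sum,
    sum_sub_distrib, sum_Icc_one_pow_eq hzq, sum_Icc_one_pow_eq hzq', sub_sub_sub_comm, mul_sub,
    quadrant_main_term_eq (exp_ne_zero _) h1 hzq hzq', mul_pow, mul_pow, inv_pow,
    quadrant_tail_term_eq h1, f2_eq, f2K_eq, exp_mul_natCast_add_one]

/-- **Corollary 2.3, second identity.** For `τ` in the fundamental region, `λ > 0`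
avoiding the (removable) degeneracies, and `K ≥ 1`,
`Σ_{n=1}^{K} ( ½ e^{iλ(nτ-n)} + Σ_{m=-n+1}^{n-1} e^{iλ(nτ+m)} + ½ e^{iλ(nτ+n)} )
  = 2 e^{iτλ} f₂(τ,λ) − 2 e^{iτλ(K+1)} f₂^{(K)}(τ,λ)`. -/
theorem quadrant_sum_f2 (τ : ℂ) (hτ1 : -(1 / 2 : ℝ) < τ.re) (hτ2 : τ.re ≤ 1 / 2)
    (hτ3 : 0 < τ.im) (hτ4 : 1 ≤ ‖τ‖)
    (hτ5 : ‖τ‖ = 1 → 0 ≤ τ.re)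
    (l : ℝ) (hl : 0 < l)
    (h1 : Complex.exp (Complex.I * (l : ℂ)) ≠ 1)
    (h2 : Complex.exp (Complex.I * (l : ℂ) * (τ - 1)) ≠ 1)
    (h3 : Complex.exp (Complex.I * (l : ℂ) * (τ + 1)) ≠ 1)
    (K : ℕ) (hK : 1 ≤ K) :
    ∑ n ∈ Finset.Icc 1 K,
        ((1 / 2 : ℂ) * Complex.exp (Complex.I * (l : ℂ) * ((n : ℂ) * τ - (n : ℂ))) +
          ∑ m ∈ Finset.Icc (-(n : ℤ) + 1) ((n : ℤ) - 1),
            Complex.exp (Complex.I * (l : ℂ) * ((n : ℂ) * τ + (m : ℂ))) +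
          (1 / 2 : ℂ) * Complex.exp (Complex.I * (l : ℂ) * ((n : ℂ) * τ + (n : ℂ)))) =
      2 * Complex.exp (Complex.I * τ * (l : ℂ)) * f2 τ l -
        2 * Complex.exp (Complex.I * τ * (l : ℂ) * ((K : ℂ) + 1)) * f2K τ l K :=
  quadrant_sum_f2_general τ l h1 h2 h3 K
end

section
/- Let τ ∈ ℂ lie in the fundamental region. For each n ∈ ℤ the inner limit c_n = lim_{M→∞} Σ_{m=-M}^{M} 1/(m+nτ)² exists (with the term (m,n) = (0,0) omitted), the outer limit E₂ = lim_{N→∞} Σ_{n=-N}^{N} c_n exists, and E₂ = Ẽ₂(τ) − (4i/τ) arctan(iτ), where arctan denotes the principal branch of the complex arctangent. -/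
/-!
Each row converges absolutely, since `‖m + nτ‖² ≥ (m² + n²) / 2` on the fundamental region.
Comparing with the telescoping series of `1 / (m + nτ)`, what row `n` adds beyond the square
`|m| ≤ N` is `1 / (N + nτ) + 1 / (N - nτ) + O(N⁻²)`; over the `2N + 1` rows the errors are `O(1/N)`,
so `Σ_{|n|≤N} c_n - S_N = 2 Σ_{|n|≤N} 1 / (N + nτ) + o(1)`. Comparing each `1 / (N + nτ)` with
`(log (N + (n + 1)τ) - log (N + nτ)) / τ` and telescoping, the last sum tends to
`(log (1 + τ) - log (1 - τ)) / τ = -(2i / τ) arctan (iτ)`.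
-/

/-- `S_K = Σ_{(m,n)∈ℤ²∖{(0,0)}, |m|≤K, |n|≤K} 1/(m+nτ)²`. -/
noncomputable def latticeSquareSum2 (τ : ℂ) (K : ℕ) : ℂ :=
  ∑ p ∈ (Finset.Icc (-(K : ℤ)) (K : ℤ) ×ˢ Finset.Icc (-(K : ℤ)) (K : ℤ)).erase (0, 0),
    1 / ((p.1 : ℂ) + (p.2 : ℂ) * τ) ^ 2

open Finset Filter Complex Topology

namespace EisensteinVsSquare

lemma sum_Ico_sub' {G : Type*} [AddCommGroup G] (F : ℕ → G) {N M : ℕ} (hNM : N ≤ M) :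
    ∑ j ∈ Ico N M, (F j - F (j + 1)) = F N - F M := by
  rw [← neg_sub, ← sum_Ico_sub F hNM, ← sum_neg_distrib]
  simp only [neg_sub]

lemma norm_sum_Ico_sub_sub_le {f F : ℕ → ℂ} {N M : ℕ} (hNM : N ≤ M) (C : ℝ)
    (h : ∀ j ∈ Ico N M, ‖f j - (F j - F (j + 1))‖ ≤ C * (1 / j - 1 / (j + 1))) :
    ‖∑ j ∈ Ico N M, f j - (F N - F M)‖ ≤ C * (1 / N - 1 / M) := by
  have hinv := sum_Ico_sub' (fun j : ℕ => 1 / (j : ℝ)) hNM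
  push_cast at hinv
  calc ‖∑ j ∈ Ico N M, f j - (F N - F M)‖
      = ‖∑ j ∈ Ico N M, (f j - (F j - F (j + 1)))‖ := by
        rw [sum_sub_distrib, sum_Ico_sub' F hNM]
    _ ≤ ∑ j ∈ Ico N M, C * (1 / j - 1 / (j + 1)) := norm_sum_le_of_le _ h
    _ = C * (1 / N - 1 / M) := by rw [← mul_sum, hinv]

lemma sum_Icc_neg_eq_add_sum_range {G : Type*} [AddCommGroup G] (g : ℤ → G) (M : ℕ) :
    ∑ m ∈ Icc (-(M : ℤ)) M, g m = g 0 + ∑ j ∈ range M, (g (j + 1) + g (-(j + 1))) := by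
  induction M with
  | zero => simp
  | succ M ih =>
    rw [Nat.cast_succ, sum_Icc_succ_eq_add_endpoints, ih, sum_range_succ]
    abel

lemma sum_Icc_neg_comp {G : Type*} [AddCommMonoid G] (g : ℤ → G) (N : ℕ) :
    ∑ n ∈ Icc (-(N : ℤ)) N, g (-n) = ∑ n ∈ Icc (-(N : ℤ)) N, g n :=
  sum_nbij' (- ·) (- ·) (by simp only [mem_Icc, neg_le_neg_iff, and_imp]; omega)
    (by simp only [mem_Icc, neg_le_neg_iff, and_imp]; omega) (by simp) (by simp) (by simp)

lemma tendsto_one_div_natCast_add (z : ℂ) :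
    Tendsto (fun M : ℕ => 1 / ((M : ℂ) + z)) atTop (𝓝 0) := by
  simpa only [one_div, Function.comp_def] using tendsto_inv₀_cobounded.comp
    ((tendsto_add_const_cobounded z).comp tendsto_natCast_atTop_cobounded)

lemma log_mul_of_re_pos {a b : ℂ} (ha : 0 < a.re) (hb : 0 < b.re) :
    log (a * b) = log a + log b := by
  have ha' := abs_arg_lt_pi_div_two_iff.mpr (Or.inl ha)
  have hb' := abs_arg_lt_pi_div_two_iff.mpr (Or.inl hb)
  rw [abs_lt] at ha' hb'
  refine log_mul (fun h => by simp [h] at ha) (fun h => by simp [h] at hb) ⟨?_, ?_⟩ <;>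
    linarith [Real.pi_pos]

lemma norm_one_div_sub_log_sub_log_div_le {w τ : ℂ} (hτ : τ ≠ 0) (hw : 0 < w.re)
    (hτw : 2 * ‖τ‖ ≤ ‖w‖) : ‖1 / w - (log (w + τ) - log w) / τ‖ ≤ ‖τ‖ / ‖w‖ ^ 2 := by
  have hw₀ : w ≠ 0 := fun h => by simp [h] at hw
  have hw' : 0 < ‖w‖ := norm_pos_iff.mpr hw₀
  set u := τ / w with hu
  have hu_le : ‖u‖ ≤ 1 / 2 := by
    rw [hu, norm_div, div_le_iff₀ hw']
    linarith
  have hu_re : 0 < (1 + u).re := by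
    have := (abs_le.mp ((abs_re_le_norm u).trans hu_le)).1
    simp only [add_re, one_re]
    linarith
  have hlog : log (w + τ) = log w + log (1 + u) := by
    rw [← log_mul_of_re_pos hw hu_re, hu]
    congr 1
    field_simp
  have hlog_sub : ‖log (1 + u) - u‖ ≤ ‖u‖ ^ 2 := by
    refine (norm_log_one_add_sub_self_le (by linarith)).trans ?_
    have : (1 - ‖u‖)⁻¹ ≤ 2 := by
      rw [inv_le_comm₀ (by linarith) (by norm_num)]
      linarith
    nlinarith [sq_nonneg ‖u‖]
  calc ‖1 / w - (log (w + τ) - log w) / τ‖ = ‖log (1 + u) - u‖ / ‖τ‖ := by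
        rw [hlog, ← norm_neg, ← norm_div]
        congr 1
        rw [hu]
        field_simp
        ring
    _ ≤ ‖u‖ ^ 2 / ‖τ‖ := by gcongr
    _ = ‖τ‖ / ‖w‖ ^ 2 := by
        rw [hu, norm_div]
        field_simp

section Tail

variable {z : ℂ}

lemma natCast_add_ne_zero (hz : ∀ j : ℕ, (j : ℝ) / 2 ≤ ‖(j : ℂ) + z‖) {j : ℕ}
    (hj : 0 < j) : (j : ℂ) + z ≠ 0 := by
  intro h0
  have := hz j
  rw [h0, norm_zero] at this
  have : (0 : ℝ) < j := by exact_mod_cast hj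
  linarith

lemma norm_one_div_natCast_add_le (hz : ∀ j : ℕ, (j : ℝ) / 2 ≤ ‖(j : ℂ) + z‖) {j : ℕ}
    (hj : 0 < j) : ‖1 / ((j : ℂ) + z)‖ ≤ 2 / j := by
  have hj' : (0 : ℝ) < j := by exact_mod_cast hj
  rw [norm_div, norm_one, div_le_div_iff₀ (by linarith [hz j]) hj']
  linarith [hz j]

noncomputable def shiftedInvSq (z : ℂ) (j : ℕ) : ℂ := 1 / ((j : ℂ) + 1 + z) ^ 2

lemma norm_shiftedInvSq_le (hz : ∀ j : ℕ, (j : ℝ) / 2 ≤ ‖(j : ℂ) + z‖) (j : ℕ) :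
    ‖shiftedInvSq z j‖ ≤ (2 / (j + 1)) ^ 2 := by
  have := norm_one_div_natCast_add_le hz j.succ_pos
  push_cast at this
  rw [shiftedInvSq, one_div, norm_inv, norm_pow, ← inv_pow, ← norm_inv, ← one_div]
  gcongr

lemma summable_shiftedInvSq (hz : ∀ j : ℕ, (j : ℝ) / 2 ≤ ‖(j : ℂ) + z‖) :
    Summable (shiftedInvSq z) := by
  refine Summable.of_norm_bounded ?_ (norm_shiftedInvSq_le hz)
  refine (((summable_nat_add_iff 1).mpr (Real.summable_one_div_nat_pow.mpr one_lt_two)).mul_left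
    4).congr fun j => ?_
  push_cast
  field_simp
  norm_num

lemma shiftedInvSq_sub_sub (hz : ∀ j : ℕ, (j : ℝ) / 2 ≤ ‖(j : ℂ) + z‖) {j : ℕ}
    (hj : 0 < j) :
    shiftedInvSq z j - (1 / ((j : ℂ) + z) - 1 / ((j : ℂ) + 1 + z))
      = -(1 / ((j : ℂ) + z) * (1 / ((j : ℂ) + 1 + z)) ^ 2) := by
  have h₀ := natCast_add_ne_zero hz hj
  have h₁ := natCast_add_ne_zero hz j.succ_pos
  push_cast at h₁
  rw [shiftedInvSq]
  field_simp
  ring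

lemma norm_sum_Ico_shiftedInvSq_sub_le (hz : ∀ j : ℕ, (j : ℝ) / 2 ≤ ‖(j : ℂ) + z‖)
    {N M : ℕ} (hN : 0 < N) (hNM : N ≤ M) :
    ‖∑ j ∈ Ico N M, shiftedInvSq z j - (1 / ((N : ℂ) + z) - 1 / ((M : ℂ) + z))‖
      ≤ 8 / N ^ 2 := by
  have hN' : (0 : ℝ) < N := by exact_mod_cast hN
  calc _ ≤ 8 / (N : ℝ) * (1 / N - 1 / M) := by
        refine norm_sum_Ico_sub_sub_le (F := fun j : ℕ => 1 / ((j : ℂ) + z)) hNM _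
          fun j hjNM => ?_
        have hNj : N ≤ j := (mem_Ico.mp hjNM).1
        have hj : 0 < j := hN.trans_le hNj
        have h₀ := norm_one_div_natCast_add_le hz hj
        have h₁ := norm_one_div_natCast_add_le hz j.succ_pos
        have hNj' : (N : ℝ) ≤ j := by exact_mod_cast hNj
        have hj' : (0 : ℝ) < j := hN'.trans_le hNj'
        push_cast at h₁ ⊢
        rw [shiftedInvSq_sub_sub hz hj, norm_neg, norm_mul, norm_pow]
        calc _ ≤ 2 / (j : ℝ) * (2 / (j + 1)) ^ 2 := by gcongr
          _ = 8 / (j + 1) * (1 / j - 1 / (j + 1)) := by field_simp; ring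
          _ ≤ 8 / N * (1 / j - 1 / (j + 1)) := by
            have : 0 ≤ 1 / (j : ℝ) - 1 / (j + 1) := by
              rw [sub_nonneg]; gcongr; linarith
            gcongr
            linarith
    _ ≤ 8 / N * (1 / N) := by
        have : 0 ≤ 1 / (M : ℝ) := by positivity
        gcongr
        linarith
    _ = 8 / N ^ 2 := by ring

lemma norm_tsum_sub_sum_range_shiftedInvSq_sub_le
    (hz : ∀ j : ℕ, (j : ℝ) / 2 ≤ ‖(j : ℂ) + z‖) {N : ℕ} (hN : 0 < N) :
    ‖(∑' j, shiftedInvSq z j - ∑ j ∈ range N, shiftedInvSq z j) - 1 / ((N : ℂ) + z)‖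
      ≤ 8 / N ^ 2 := by
  have hlim : Tendsto (fun M : ℕ => (∑ j ∈ range M, shiftedInvSq z j
      - ∑ j ∈ range N, shiftedInvSq z j) - (1 / ((N : ℂ) + z) - 1 / ((M : ℂ) + z))) atTop
      (𝓝 ((∑' j, shiftedInvSq z j - ∑ j ∈ range N, shiftedInvSq z j) - 1 / ((N : ℂ) + z))) := by
    simpa using ((summable_shiftedInvSq hz).hasSum.tendsto_sum_nat.sub_const _).sub
      (tendsto_const_nhds.sub (tendsto_one_div_natCast_add z))
  refine le_of_tendsto hlim.norm (eventually_atTop.mpr ⟨N, fun M hM => ?_⟩)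
  rw [← sum_Ico_eq_sub _ hM]
  exact norm_sum_Ico_shiftedInvSq_sub_le hz hN hM

end Tail

section Lattice

variable {τ : ℂ}

lemma sq_add_sq_div_two_le_norm_sq (hre : |τ.re| ≤ 1 / 2) (hτ : 1 ≤ ‖τ‖) (x y : ℝ) :
    (x ^ 2 + y ^ 2) / 2 ≤ ‖(x : ℂ) + y * τ‖ ^ 2 := by
  have hτ2 : 1 ≤ τ.re ^ 2 + τ.im ^ 2 := by
    have : ‖τ‖ ^ 2 = τ.re ^ 2 + τ.im ^ 2 := by
      rw [Complex.sq_norm, Complex.normSq_apply]; ring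
    nlinarith
  have hxy : ‖(x : ℂ) + y * τ‖ ^ 2
      = x ^ 2 + 2 * x * y * τ.re + y ^ 2 * (τ.re ^ 2 + τ.im ^ 2) := by
    rw [Complex.sq_norm, Complex.normSq_apply]
    simp only [add_re, ofReal_re, mul_re, ofReal_im, zero_mul, sub_zero, add_im, mul_im, add_zero,
      zero_add]
    ring
  rw [hxy]
  rw [abs_le] at hre
  nlinarith [sq_nonneg (x + y), sq_nonneg (x - y), sq_nonneg y]

lemma half_le_norm_natCast_add_mul (hre : |τ.re| ≤ 1 / 2) (hτ : 1 ≤ ‖τ‖) (y : ℝ) (j : ℕ) :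
    (j : ℝ) / 2 ≤ ‖(j : ℂ) + y * τ‖ := by
  have := sq_add_sq_div_two_le_norm_sq hre hτ j y
  push_cast at this
  refine (pow_le_pow_iff_left₀ (by positivity) (norm_nonneg _) two_ne_zero).mp ?_
  nlinarith [sq_nonneg y]

lemma half_le_norm_natCast_add_intCast_mul (hre : |τ.re| ≤ 1 / 2) (hτ : 1 ≤ ‖τ‖) (n : ℤ)
    (j : ℕ) : (j : ℝ) / 2 ≤ ‖(j : ℂ) + n * τ‖ := by
  exact_mod_cast half_le_norm_natCast_add_mul hre hτ n j

noncomputable def rowSum (τ : ℂ) (n : ℤ) (M : ℕ) : ℂ :=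
  ∑ m ∈ Icc (-(M : ℤ)) M, 1 / ((m : ℂ) + n * τ) ^ 2

noncomputable def rowLimit (τ : ℂ) (n : ℤ) : ℂ :=
  1 / ((n : ℂ) * τ) ^ 2 + ∑' j, shiftedInvSq (n * τ) j + ∑' j, shiftedInvSq ((-n : ℤ) * τ) j

lemma rowSum_eq (τ : ℂ) (n : ℤ) (M : ℕ) :
    rowSum τ n M = 1 / ((n : ℂ) * τ) ^ 2 + ∑ j ∈ range M, shiftedInvSq (n * τ) j
      + ∑ j ∈ range M, shiftedInvSq ((-n : ℤ) * τ) j := by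
  rw [rowSum, sum_Icc_neg_eq_add_sum_range, add_assoc, ← sum_add_distrib]
  congr 1
  · simp
  · refine sum_congr rfl fun j _ => ?_
    simp only [shiftedInvSq]
    push_cast
    ring

lemma tendsto_rowSum (hre : |τ.re| ≤ 1 / 2) (hτ : 1 ≤ ‖τ‖) (n : ℤ) :
    Tendsto (rowSum τ n) atTop (𝓝 (rowLimit τ n)) := by
  have hsum (k : ℤ) := (summable_shiftedInvSq
    (half_le_norm_natCast_add_intCast_mul hre hτ k)).hasSum.tendsto_sum_nat
  simpa only [funext (rowSum_eq τ n), rowLimit] using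
    (tendsto_const_nhds.add (hsum n)).add (hsum (-n))

lemma norm_rowLimit_sub_rowSum_sub_le (hre : |τ.re| ≤ 1 / 2) (hτ : 1 ≤ ‖τ‖) (n : ℤ) {N : ℕ}
    (hN : 0 < N) :
    ‖(rowLimit τ n - rowSum τ n N) - (1 / ((N : ℂ) + n * τ) + 1 / ((N : ℂ) + (-n : ℤ) * τ))‖
      ≤ 16 / N ^ 2 := by
  have htail (k : ℤ) := norm_tsum_sub_sum_range_shiftedInvSq_sub_le
    (half_le_norm_natCast_add_intCast_mul hre hτ k) hN
  calc _ = ‖((∑' j, shiftedInvSq (n * τ) j - ∑ j ∈ range N, shiftedInvSq (n * τ) j)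
          - 1 / ((N : ℂ) + n * τ))
        + ((∑' j, shiftedInvSq ((-n : ℤ) * τ) j
            - ∑ j ∈ range N, shiftedInvSq ((-n : ℤ) * τ) j) - 1 / ((N : ℂ) + (-n : ℤ) * τ))‖ := by
        rw [rowLimit, rowSum_eq]
        ring_nf
    _ ≤ 8 / N ^ 2 + 8 / N ^ 2 := norm_add_le_of_le (htail n) (htail (-n))
    _ = 16 / N ^ 2 := by ring

lemma latticeSquareSum2_eq_sum_rowSum (τ : ℂ) (K : ℕ) :
    latticeSquareSum2 τ K = ∑ n ∈ Icc (-(K : ℤ)) K, rowSum τ n K := by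
  rw [latticeSquareSum2, sum_erase _ (by simp), sum_product_right]
  rfl

noncomputable def boundarySum (τ : ℂ) (N : ℕ) : ℂ :=
  ∑ n ∈ Icc (-(N : ℤ)) N, 1 / ((N : ℂ) + n * τ)

lemma tendsto_sum_rowLimit_sub_rowSum_sub_boundarySum (hre : |τ.re| ≤ 1 / 2)
    (hτ : 1 ≤ ‖τ‖) :
    Tendsto (fun N : ℕ => ∑ n ∈ Icc (-(N : ℤ)) N, (rowLimit τ n - rowSum τ n N)
      - 2 * boundarySum τ N) atTop (𝓝 0) := by
  have hbound : ∀ N : ℕ, 0 < N → ‖∑ n ∈ Icc (-(N : ℤ)) N, (rowLimit τ n - rowSum τ n N)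
      - 2 * boundarySum τ N‖ ≤ 48 / N := by
    intro N hN
    have hN' : (1 : ℝ) ≤ N := by exact_mod_cast hN
    have hsym : ∑ n ∈ Icc (-(N : ℤ)) N,
        (1 / ((N : ℂ) + n * τ) + 1 / ((N : ℂ) + (-n : ℤ) * τ)) = 2 * boundarySum τ N := by
      rw [sum_add_distrib, sum_Icc_neg_comp (fun n : ℤ => 1 / ((N : ℂ) + n * τ)), boundarySum]
      ring
    rw [← hsym, ← sum_sub_distrib]
    calc _ ≤ ∑ _n ∈ Icc (-(N : ℤ)) N, 16 / (N : ℝ) ^ 2 :=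
          norm_sum_le_of_le _ fun n _ => norm_rowLimit_sub_rowSum_sub_le hre hτ n hN
      _ = (2 * N + 1) * (16 / (N : ℝ) ^ 2) := by
          rw [sum_const, Int.card_Icc, show ((N : ℤ) + 1 - -N).toNat = 2 * N + 1 by omega,
            nsmul_eq_mul]
          push_cast
          ring
      _ ≤ 48 / N := by
          rw [← mul_div_assoc, div_le_div_iff₀ (by positivity) (by positivity)]
          nlinarith
  refine squeeze_zero_norm' ?_ (tendsto_const_div_atTop_nhds_zero_nat 48)
  exact eventually_atTop.mpr ⟨1, hbound⟩

lemma sum_Ico_log_sub_log_div (hadd : 1 + τ ≠ 0) (hsub : 1 - τ ≠ 0) {N : ℕ} (hN : 0 < N) :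
    ∑ n ∈ Ico (-(N : ℤ)) N, (log (N + (n + 1) * τ) - log (N + n * τ)) / τ
      = (log (1 + τ) - log (1 - τ)) / τ := by
  have hN' : (0 : ℝ) < N := by exact_mod_cast hN
  have htel := sum_Ico_int_sub N (fun n : ℤ => log ((N : ℂ) + n * τ))
  push_cast at htel
  calc _ = (∑ n ∈ Ico (-(N : ℤ)) N, (log (N + (n + 1) * τ) - log (N + n * τ))) / τ :=
        (sum_div ..).symm
    _ = (log (N + N * τ) - log (N + -N * τ)) / τ := by
        rw [← neg_sub _ (log _), ← htel, ← sum_neg_distrib]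
        simp only [neg_sub]
    _ = (log (1 + τ) - log (1 - τ)) / τ := by
        rw [show (N : ℂ) + N * τ = (N : ℝ) * (1 + τ) by push_cast; ring,
          show (N : ℂ) + -N * τ = (N : ℝ) * (1 - τ) by push_cast; ring,
          log_ofReal_mul hN' hadd, log_ofReal_mul hN' hsub]
        ring

lemma norm_boundarySum_sub_le (hre : |τ.re| ≤ 1 / 2) (hτ : 1 ≤ ‖τ‖) {N : ℕ} (hN : 0 < N)
    (hNτ : 4 * ‖τ‖ ≤ N) :
    ‖boundarySum τ N - (log (1 + τ) - log (1 - τ)) / τ‖ ≤ (8 * ‖τ‖ + 2) / N := by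
  have hN' : (0 : ℝ) < N := by exact_mod_cast hN
  have hτ₀ : τ ≠ 0 := norm_pos_iff.mp (by linarith)
  have hre' := abs_le.mp hre
  have hadd : 1 + τ ≠ 0 := fun h => by
    have := congrArg re h
    simp only [add_re, one_re, zero_re] at this
    linarith
  have hsub : 1 - τ ≠ 0 := fun h => by
    have := congrArg re h
    simp only [sub_re, one_re, zero_re] at this
    linarith
  have hterm : ∀ n ∈ Ico (-(N : ℤ)) N,
      ‖1 / ((N : ℂ) + n * τ) - (log (N + (n + 1) * τ) - log (N + n * τ)) / τ‖
        ≤ 4 * ‖τ‖ / N ^ 2 := by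
    intro n hn
    obtain ⟨hn₁, hn₂⟩ := mem_Ico.mp hn
    have hn₁' : -(N : ℝ) ≤ n := by exact_mod_cast hn₁
    have hn₂' : (n : ℝ) ≤ N := by exact_mod_cast hn₂.le
    have hw := half_le_norm_natCast_add_intCast_mul hre hτ n N
    have hw_re : 0 < ((N : ℂ) + n * τ).re := by
      simp only [add_re, natCast_re, mul_re, intCast_re, intCast_im, zero_mul, sub_zero]
      nlinarith
    rw [show (N : ℂ) + (n + 1) * τ = N + n * τ + τ by ring]
    calc _ ≤ ‖τ‖ / ‖(N : ℂ) + n * τ‖ ^ 2 :=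
          norm_one_div_sub_log_sub_log_div_le hτ₀ hw_re (by linarith)
      _ ≤ ‖τ‖ / ((N : ℝ) / 2) ^ 2 := by gcongr
      _ = 4 * ‖τ‖ / N ^ 2 := by ring
  have hlast :=
    norm_one_div_natCast_add_le (half_le_norm_natCast_add_intCast_mul hre hτ N) hN
  push_cast at hlast
  rw [boundarySum, sum_Icc_eq_sum_Ico_add _ (by omega), ← sum_Ico_log_sub_log_div hadd hsub hN]
  calc _ = ‖∑ n ∈ Ico (-(N : ℤ)) N,
          (1 / ((N : ℂ) + n * τ) - (log (N + (n + 1) * τ) - log (N + n * τ)) / τ)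
        + 1 / ((N : ℂ) + N * τ)‖ := by
        rw [sum_sub_distrib, Int.cast_natCast, add_sub_right_comm]
    _ ≤ ∑ _n ∈ Ico (-(N : ℤ)) N, 4 * ‖τ‖ / N ^ 2 + 2 / N :=
        norm_add_le_of_le (norm_sum_le_of_le _ hterm) hlast
    _ = (8 * ‖τ‖ + 2) / N := by
        rw [sum_const, Int.card_Ico, show ((N : ℤ) - -N).toNat = 2 * N by omega, nsmul_eq_mul]
        push_cast
        field_simp
        ring

lemma tendsto_boundarySum (hre : |τ.re| ≤ 1 / 2) (hτ : 1 ≤ ‖τ‖) :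
    Tendsto (boundarySum τ) atTop (𝓝 ((log (1 + τ) - log (1 - τ)) / τ)) := by
  rw [tendsto_iff_norm_sub_tendsto_zero]
  refine squeeze_zero' (Eventually.of_forall fun _ => norm_nonneg _) ?_
    (tendsto_const_div_atTop_nhds_zero_nat (8 * ‖τ‖ + 2))
  filter_upwards [eventually_ge_atTop 1,
    (tendsto_natCast_atTop_atTop (R := ℝ)).eventually_ge_atTop (4 * ‖τ‖)] with N hN hNτ
  exact norm_boundarySum_sub_le hre hτ hN hNτ

lemma log_one_add_sub_log_one_sub (h : |τ.re| < 1) :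
    log (1 + τ) - log (1 - τ) = -2 * I * arctan (I * τ) := by
  obtain ⟨h₁, h₂⟩ := abs_lt.mp h
  have hadd : 0 < (1 + τ).re := by simp only [add_re, one_re]; linarith
  have hsub : 0 < (1 - τ).re := by simp only [sub_re, one_re]; linarith
  have hinv : 0 < (1 + τ)⁻¹.re := by
    rw [inv_re]
    exact div_pos hadd (normSq_pos.mpr fun h => by simp [h] at hadd)
  rw [arctan, show 1 + I * τ * I = 1 - τ by ring_nf; rw [I_sq]; ring,
    show 1 - I * τ * I = 1 + τ by ring_nf; rw [I_sq]; ring, div_eq_mul_inv (1 - τ),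
    log_mul_of_re_pos hsub hinv, log_inv _ (slitPlane_arg_ne_pi (Or.inl hadd))]
  ring_nf
  rw [I_sq]
  ring

end Lattice

end EisensteinVsSquare

open EisensteinVsSquare

theorem eisenstein_vs_square_general (τ : ℂ) (hτ1 : -(1 / 2 : ℝ) < τ.re)
    (hτ2 : τ.re ≤ 1 / 2) (hτ4 : 1 ≤ ‖τ‖)
    (E2t : ℂ) (hE2t : Filter.Tendsto (latticeSquareSum2 τ) Filter.atTop (nhds E2t)) :
    ∃ c : ℤ → ℂ,
      (∀ n : ℤ, Filter.Tendsto
        (fun M : ℕ => ∑ m ∈ (Finset.Icc (-(M : ℤ)) (M : ℤ)).filter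
            (fun m => ¬(m = 0 ∧ n = 0)),
          1 / ((m : ℂ) + (n : ℂ) * τ) ^ 2)
        Filter.atTop (nhds (c n))) ∧
      Filter.Tendsto (fun N : ℕ => ∑ n ∈ Finset.Icc (-(N : ℤ)) (N : ℤ), c n)
        Filter.atTop
        (nhds (E2t - (4 * Complex.I / τ) * Complex.arctan (Complex.I * τ))) := by
  have hre : |τ.re| ≤ 1 / 2 := abs_le.mpr ⟨hτ1.le, hτ2⟩
  refine ⟨rowLimit τ, fun n => ?_, ?_⟩
  · refine (tendsto_rowSum hre hτ4 n).congr fun M => (sum_filter_of_ne fun m _ hm => ?_).symm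
    rintro ⟨rfl, rfl⟩
    -- the omitted term `(0, 0)` is `1 / 0 ^ 2 = 0`
    simp at hm
  · have hsplit (N : ℕ) : ∑ n ∈ Icc (-(N : ℤ)) N, rowLimit τ n = latticeSquareSum2 τ N
        + (∑ n ∈ Icc (-(N : ℤ)) N, (rowLimit τ n - rowSum τ n N) - 2 * boundarySum τ N)
        + 2 * boundarySum τ N := by
      rw [latticeSquareSum2_eq_sum_rowSum, sum_sub_distrib]
      ring
    have hlim := (hE2t.add (tendsto_sum_rowLimit_sub_rowSum_sub_boundarySum hre hτ4)).add
      ((tendsto_boundarySum hre hτ4).const_mul 2)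
    rw [log_one_add_sub_log_one_sub (hre.trans_lt (by norm_num))] at hlim
    convert hlim using 2 with N
    · exact hsplit N
    · ring

/-- **Eisenstein's summation versus summation over squares (formula (33)).**
For `τ` in the fundamental region, with `Ẽ₂(τ) = lim_K S_K`, the iterated limits
`c_n = lim_M Σ_{m=-M}^{M} 1/(m+nτ)²` (omitting `(0,0)`) and `E₂ = lim_N Σ_{n=-N}^{N} c_n`
exist, and `E₂ = Ẽ₂(τ) − (4i/τ) arctan(iτ)`. -/
theorem eisenstein_vs_square (τ : ℂ) (hτ1 : -(1 / 2 : ℝ) < τ.re)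
    (hτ2 : τ.re ≤ 1 / 2) (hτ3 : 0 < τ.im) (hτ4 : 1 ≤ ‖τ‖)
    (hτ5 : ‖τ‖ = 1 → 0 ≤ τ.re)
    (E2t : ℂ) (hE2t : Filter.Tendsto (latticeSquareSum2 τ) Filter.atTop (nhds E2t)) :
    ∃ c : ℤ → ℂ,
      (∀ n : ℤ, Filter.Tendsto
        (fun M : ℕ => ∑ m ∈ (Finset.Icc (-(M : ℤ)) (M : ℤ)).filter
            (fun m => ¬(m = 0 ∧ n = 0)),
          1 / ((m : ℂ) + (n : ℂ) * τ) ^ 2)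
        Filter.atTop (nhds (c n))) ∧
      Filter.Tendsto (fun N : ℕ => ∑ n ∈ Finset.Icc (-(N : ℤ)) (N : ℤ), c n)
        Filter.atTop
        (nhds (E2t - (4 * Complex.I / τ) * Complex.arctan (Complex.I * τ))) :=
  eisenstein_vs_square_general τ hτ1 hτ2 hτ4 E2t hE2t
end
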